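/- arXiv:1812.00567 — 2 statements merged into one kernel-verified Lean document; each statement's English description precedes it below -/
import Mathlib

section
/- Every subgroup of a free group that is isomorphic to ℤ × ℤ is trivial; equivalently, if two elements of a free group commute and generate a subgroup isomorphic to ℤ², we get a contradiction: any two commuting elements of a free group lie in a common cyclic subgroup. -/
/-!
By Nielsen–Schreier the subgroup generated by `a` and `b` is itself free, and it is abelian
since `a` and `b` commute. An abelian free group has at most one generator, because the images
of two distinct generators in `Equiv.Perm (Fin 3)` can be chosen to be non-commuting
transpositions; so it is trivial or infinite cyclic.
-/

namespace FreeGroup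

variable {α : Type*}

theorem eq_of_commute_of {x y : α} (h : Commute (of x) (of y)) : x = y := by
  classical
  by_contra hxy
  let f : α → Equiv.Perm (Fin 3) := fun z => if z = x then Equiv.swap 0 1 else Equiv.swap 1 2
  have hf : Commute (f x) (f y) := h.map (lift f)
  simp only [f, if_pos rfl, if_neg (Ne.symm hxy)] at hf
  exact absurd hf.eq (by decide)

theorem isCyclic_of_subsingleton [Subsingleton α] : IsCyclic (FreeGroup α) := by
  cases isEmpty_or_nonempty α with
  | inl _ => exact _root_.isCyclic_of_subsingleton
  | inr hα =>
    have : Unique α := uniqueOfSubsingleton hα.some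
    infer_instance

end FreeGroup

theorem IsFreeGroup.isCyclic_of_isMulCommutative {G : Type*} [Group G] [IsFreeGroup G]
    [IsMulCommutative G] : IsCyclic G := by
  let e := IsFreeGroup.toFreeGroup G
  have : Subsingleton (IsFreeGroup.Generators G) :=
    ⟨fun i j => FreeGroup.eq_of_commute_of <|
      (commute_map_iff e.symm.injective).mp (mul_comm' _ _)⟩
  have : IsCyclic (FreeGroup (IsFreeGroup.Generators G)) := FreeGroup.isCyclic_of_subsingleton
  exact isCyclic_of_surjective e.symm e.symm.surjective

/-- Any two commuting elements of a free group lie in a common cyclic subgroup: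
the subgroup they generate is cyclic (in particular not isomorphic to `ℤ × ℤ`). -/
theorem commuting_elements_of_free_group_generate_cyclic (α : Type)
    (a b : FreeGroup α) (h : a * b = b * a) :
    IsCyclic (Subgroup.closure ({a, b} : Set (FreeGroup α))) := by
  have : IsMulCommutative (Subgroup.closure ({a, b} : Set (FreeGroup α))) := by
    refine Subgroup.isMulCommutative_closure ?_
    rintro x (rfl | rfl) y (rfl | rfl)
    exacts [rfl, h, h.symm, rfl]
  exact IsFreeGroup.isCyclic_of_isMulCommutative
end

section
/- In an amalgamated free product A *_C B where the images of a generating set of C form parts of free bases of A and B, if A and B are free and C is free with basis mapping to subsets of the bases of A and B, then A *_C B is free. -/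
/-!
`FreeGroup` is a left adjoint, so it preserves colimits: the amalgamated product of the free
groups `FreeGroup (β i)` over `FreeGroup γ` is the free group on the pushout of the bases
`β i` over `γ`.
-/

open Monoid

namespace FreeGroup

variable {ι γ : Type*} {β : ι → Type*} (f : ∀ i, γ → β i)

/-- Its quotient is the pushout of the bases `β i` over `γ`. -/
inductive PushoutRel : (Σ i, β i) ⊕ γ → (Σ i, β i) ⊕ γ → Prop
  | mk (i : ι) (c : γ) : PushoutRel (.inl ⟨i, f i c⟩) (.inr c)

def toPushoutI : FreeGroup (Quot (PushoutRel f)) →* PushoutI fun i => map (f i) :=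
  lift <| Quot.lift
    (Sum.elim (fun x => PushoutI.of x.1 (of x.2)) fun c => PushoutI.base _ (of c))
    (by
      rintro _ _ ⟨i, c⟩
      simpa using PushoutI.of_apply_eq_base (fun i => map (f i)) i (of c))

def ofPushoutI : (PushoutI fun i => map (f i)) →* FreeGroup (Quot (PushoutRel f)) :=
  PushoutI.lift (fun i => map fun b => Quot.mk _ (.inl ⟨i, b⟩)) (map fun c => Quot.mk _ (.inr c))
    (fun i => by ext c; exact congrArg of (Quot.sound (PushoutRel.mk i c)))

theorem toPushoutI_comp_ofPushoutI : (toPushoutI f).comp (ofPushoutI f) = MonoidHom.id _ := by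
  refine PushoutI.hom_ext (fun i => ?_) ?_ <;> ext <;> simp [toPushoutI, ofPushoutI]

theorem ofPushoutI_comp_toPushoutI : (ofPushoutI f).comp (toPushoutI f) = MonoidHom.id _ := by
  ext q
  induction q using Quot.ind with
  | mk x => rcases x with ⟨i, b⟩ | c <;> simp [toPushoutI, ofPushoutI]

def pushoutIMapEquiv : FreeGroup (Quot (PushoutRel f)) ≃* PushoutI fun i => map (f i) :=
  MonoidHom.toMulEquiv _ _ (ofPushoutI_comp_toPushoutI f) (toPushoutI_comp_ofPushoutI f)

end FreeGroup

theorem pushout_of_free_along_free_basis_is_free_general (ι γ : Type) (β : ι → Type)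
    (f : ∀ i, γ → β i) :
    IsFreeGroup (Monoid.PushoutI fun i => FreeGroup.map (f i)) :=
  IsFreeGroup.ofMulEquiv (FreeGroup.pushoutIMapEquiv f)

/-- An amalgamated free product (pushout) of free groups `A i = FreeGroup (β i)` over a
free group `C = FreeGroup γ`, where each map `C → A i` is induced by an injection of the
basis `γ` into the basis `β i`, is a free group. -/
theorem pushout_of_free_along_free_basis_is_free (ι γ : Type) (β : ι → Type)
    (f : ∀ i, γ → β i) (hf : ∀ i, Function.Injective (f i)) :
    IsFreeGroup (Monoid.PushoutI fun i => FreeGroup.map (f i)) :=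
  pushout_of_free_along_free_basis_is_free_general ι γ β f
end
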